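/- arXiv:2003.10624 — 2 statements merged into one kernel-verified Lean document; each statement's English description precedes it below -/
import Mathlib

section
/- Let F = 𝔽_{2^m}, let S ⊆ F with 0 ∉ S, 1 ∈ S, |S| = s, and S generating the additive group of F, and let c, d ∈ F with c + d ∈ S, c ≠ 0, c ≠ 1. Suppose Γ = Cay(F, S) has PEST from the edge (0,1) to the edge (c,d) at some time t > 0, and suppose there exists z₀ ∈ S with z₀ ≠ 1 and 1 + z₀ ∉ S. Fix x₀ ∈ F with Tr(c x₀) = 0 and Tr(x₀) = 1, and let M = gcd{λ_{x₀} − λ_x : x ∈ T₁, x ≠ x₀}. Then M is a power of 2, say M = 2^ℓ, and ℓ ≤ ⌊log₂(2s(s+3))/2⌋. -/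
open Matrix Finset

noncomputable section

noncomputable instance (m : ℕ) : Fintype (GaloisField 2 m) := Fintype.ofFinite _
noncomputable instance (m : ℕ) : DecidableEq (GaloisField 2 m) := Classical.decEq _

/-- The absolute trace map `Tr : 𝔽_{2^m} → 𝔽₂`. -/
def Ftr {m : ℕ} (x : GaloisField 2 m) : ZMod 2 :=
  Algebra.trace (ZMod 2) (GaloisField 2 m) x

/-- The adjacency matrix of the Cayley (cubelike) graph `Cay(G, S)`. -/
def adjMatrix {G : Type*} [AddCommGroup G] [Fintype G] [DecidableEq G]
    (S : Finset G) : Matrix G G ℂ :=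
  fun u v => if u + v ∈ S then 1 else 0

/-- The transfer matrix `H(t) = exp(i t A)`. -/
def transferMatrix {G : Type*} [AddCommGroup G] [Fintype G] [DecidableEq G]
    (S : Finset G) (t : ℝ) : Matrix G G ℂ :=
  NormedSpace.exp (Complex.I • ((t : ℂ) • adjMatrix S))

/-- The standard basis vector `e_a` of `ℂ^V`. -/
def stdBasis {G : Type*} [DecidableEq G] (a : G) : G → ℂ :=
  fun v => if v = a then 1 else 0

/-- Perfect edge state transfer from the edge `(a,b)` to the edge `(c,d)` at time `t`:
`|(1/2)(e_c - e_d)ᵀ H(t)(e_a - e_b)|² = 1`. -/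
def hasPEST {G : Type*} [AddCommGroup G] [Fintype G] [DecidableEq G]
    (S : Finset G) (a b c d : G) (t : ℝ) : Prop :=
  ‖(1 / 2 : ℂ) * dotProduct (stdBasis c - stdBasis d)
      (transferMatrix S t *ᵥ (stdBasis a - stdBasis b))‖ ^ 2 = 1

/-- The eigenvalue `λ_x = ∑_{s ∈ S} (-1)^{Tr(xs)}` of a cubelike graph on `𝔽_{2^m}`. -/
def lamF {m : ℕ} (S : Finset (GaloisField 2 m)) (x : GaloisField 2 m) : ℤ :=
  ∑ s ∈ S, (-1) ^ (Ftr (x * s)).val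

/-!
The characters `χ_x(y) = (-1)^Tr(xy)` diagonalise every cubelike graph, so the amplitude of the
transfer from `(0,1)` to `(c,d)` is `2^{-m} ∑_{x ∈ T₁} e^{itλ_x} (χ_x(c) - χ_x(d))`. Its
`2^{m-1}` terms have modulus at most `2`, so under PEST they are all equal and non-zero; comparing
`x₀` with an `x ∈ T₁` with `Tr(cx) = 1` then gives `λ_x ≠ λ_{x₀}`.

On the other hand `M` divides `∑_{x ∈ T₁} (λ_{x₀} - λ_x) χ_x(z₀) = -2^{m-1}`, so it is a power
of `2`. Averaging `λ_x²` over `{x ∈ T₁ | Tr(cx) = 1}` produces such an `x` with `λ_x² ≤ 2s`, and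
`M ≤ |λ_{x₀} - λ_x|` gives `M² ≤ 2s² + 4s`.
-/

lemma smul_eq_sum_of_norm_sum_eq {E : Type*} [NormedAddCommGroup E] [InnerProductSpace ℝ E]
    {ι : Type*} {s : Finset ι} {z : ι → E} {r : ℝ} (hz : ∀ i ∈ s, ‖z i‖ ≤ r)
    (hsum : ‖∑ i ∈ s, z i‖ = #s * r) {i : ι} (hi : i ∈ s) :
    (#s : ℝ) • z i = ∑ j ∈ s, z j := by
  set w := ∑ j ∈ s, z j
  have hle : ∀ j ∈ s, inner ℝ (z j) w ≤ r * ‖w‖ := fun j hj =>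
    (real_inner_le_norm _ _).trans (mul_le_mul_of_nonneg_right (hz j hj) (norm_nonneg _))
  have hinner : inner ℝ (z i) w = r * ‖w‖ := by
    refine (sum_eq_sum_iff_of_le hle).1 ?_ i hi
    rw [← sum_inner, real_inner_self_eq_norm_sq, sum_const, nsmul_eq_mul, hsum]
    ring
  have hzi : ‖z i‖ ^ 2 ≤ r ^ 2 := pow_le_pow_left₀ (norm_nonneg _) (hz i hi) 2
  -- With `⟪z i, w⟫ = r‖w‖`, expanding gives `‖#s • z i - w‖² ≤ 0`.
  rw [← sub_eq_zero, ← norm_eq_zero, ← sq_eq_zero_iff]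
  refine le_antisymm ?_ (sq_nonneg _)
  rw [norm_sub_sq_real, real_inner_smul_left, norm_smul, hinner, hsum, Real.norm_natCast]
  nlinarith [sq_nonneg (#s : ℝ)]

lemma Matrix.exp_eq_of_mul_eq_mul_diagonal {n : Type*} [Fintype n] [DecidableEq n]
    {A Q Q' : Matrix n n ℂ} {μ : n → ℂ} (hAQ : A * Q = Q * diagonal μ) (hQ : Q * Q' = 1) :
    NormedSpace.exp A = Q * diagonal (fun i => Complex.exp (μ i)) * Q' := by
  have hU : IsUnit Q := (isUnit_iff_isUnit_det Q).2 (isUnit_det_of_right_inverse hQ)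
  have hA : A = Q * diagonal μ * Q⁻¹ := by
    rw [inv_eq_right_inv hQ, ← hAQ, mul_assoc, hQ, mul_one]
  rw [hA, exp_conj Q _ hU, exp_diagonal, inv_eq_right_inv hQ, Pi.exp_def,
    Complex.exp_eq_exp_ℂ]

lemma stdBasis_eq_piSingle {G : Type*} [DecidableEq G] (a : G) :
    stdBasis a = Pi.single a 1 := by
  ext v
  simp [_root_.stdBasis, Pi.single_apply]

lemma stdBasis_sub_dotProduct_mulVec {G : Type*} [Fintype G] [DecidableEq G]
    (B : Matrix G G ℂ) (a b c d : G) :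
    (stdBasis c - stdBasis d) ⬝ᵥ (B *ᵥ (stdBasis a - stdBasis b))
      = B c a - B c b - (B d a - B d b) := by
  simp [stdBasis_eq_piSingle, mulVec_sub, sub_dotProduct]
  ring

lemma sum_ite_add_eq_le {G : Type*} [AddGroup G] [DecidableEq G] (S : Finset G) (a v : G)
    {N : ℤ} (hN : 0 ≤ N) : ∑ b ∈ S, (if a + b = v then N else 0) ≤ N := by
  simp_rw [← eq_neg_add_iff_add_eq, sum_ite_eq']
  split_ifs <;> omega

lemma Nat.le_log_div_two_of_sq_pow_le {b ℓ n : ℕ} (hb : 1 < b) (h : (b ^ ℓ) ^ 2 ≤ n) :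
    ℓ ≤ Nat.log b n / 2 := by
  have := Nat.le_log_of_pow_le hb (show b ^ (ℓ * 2) ≤ n by rwa [pow_mul])
  omega

lemma Int.exists_eq_two_pow_of_dvd {M : ℤ} (hM : 0 ≤ M) {n : ℕ} (h : M ∣ 2 ^ n) :
    ∃ ℓ : ℕ, M = 2 ^ ℓ := by
  lift M to ℕ using hM
  obtain ⟨ℓ, -, rfl⟩ := (Nat.dvd_prime_pow Nat.prime_two).1 (by exact_mod_cast h)
  exact ⟨ℓ, by push_cast; rfl⟩

namespace CubelikePEST

local notation "F" => GaloisField 2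

variable {m : ℕ}

def trChar (m : ℕ) : AddChar (F m) ℤ where
  toFun x := (-1) ^ (Ftr x).val
  map_zero_eq_one' := by simp [Ftr]
  map_add_eq_mul' x y := by
    have key : ∀ a b : ZMod 2, (-1 : ℤ) ^ (a + b).val = (-1) ^ a.val * (-1) ^ b.val := by
      decide
    simpa only [Ftr, map_add] using key _ _

lemma trChar_eq_ite (x : F m) : trChar m x = if Ftr x = 1 then -1 else 1 := by
  have key : ∀ a : ZMod 2, (-1 : ℤ) ^ a.val = if a = 1 then -1 else 1 := by decide
  exact key (Ftr x)

lemma trChar_of_trace_eq_one {x : F m} (hx : Ftr x = 1) : trChar m x = -1 := by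
  rw [trChar_eq_ite, if_pos hx]

lemma trChar_of_trace_eq_zero {x : F m} (hx : Ftr x = 0) : trChar m x = 1 := by
  rw [trChar_eq_ite, if_neg (by simp [hx])]

lemma trChar_eq_one_or_eq_neg_one (x : F m) : trChar m x = 1 ∨ trChar m x = -1 := by
  rw [trChar_eq_ite]; split_ifs <;> simp

lemma abs_trChar (x : F m) : |trChar m x| = 1 := by
  rcases trChar_eq_one_or_eq_neg_one x with h | h <;> simp [h]

lemma isPrimitive_trChar : (trChar m).IsPrimitive := by
  refine AddChar.IsPrimitive.of_ne_one (AddChar.ne_one_iff.2 ?_)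
  obtain ⟨x, hx⟩ := Algebra.trace_surjective (ZMod 2) (F m) 1
  exact ⟨x, by simp [trChar_eq_ite, Ftr, hx]⟩

lemma sum_trChar_mul (hm : m ≠ 0) (u : F m) :
    ∑ x, trChar m (x * u) = if u = 0 then 2 ^ m else 0 := by
  rw [AddChar.sum_mulShift u isPrimitive_trChar, ← Nat.card_eq_fintype_card,
    GaloisField.card 2 m hm]
  push_cast
  rfl

lemma lamF_eq_sum_trChar (S : Finset (F m)) (x : F m) :
    lamF S x = ∑ a ∈ S, trChar m (x * a) := rfl

lemma two_mul_sum_filter_trace_eq_one {R : Type*} [CommRing R] (A : Finset (F m))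
    (g : F m → F m) (f : F m → R) :
    2 * ∑ x ∈ A with Ftr (g x) = 1, f x = ∑ x ∈ A, f x * (1 - trChar m (g x)) := by
  rw [sum_filter, mul_sum]
  refine sum_congr rfl fun x _ => ?_
  rw [trChar_eq_ite]
  split_ifs <;> push_cast <;> ring

def traceOneSet (m : ℕ) : Finset (F m) := {x | Ftr x = 1}

lemma two_mul_sum_traceOneSet_trChar (hm : m ≠ 0) (u : F m) :
    2 * ∑ x ∈ traceOneSet m, trChar m (x * u)
      = (if u = 0 then 2 ^ m else 0) - (if u = 1 then 2 ^ m else 0) := by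
  have hsplit : ∀ x : F m, trChar m (x * u) * (1 - trChar m x)
      = trChar m (x * u) - trChar m (x * (u + 1)) := fun x => by
    rw [mul_add, mul_one, AddChar.map_add_eq_mul]; ring
  rw [traceOneSet, two_mul_sum_filter_trace_eq_one univ (fun x => x)]
  simp only [Int.cast_id]
  rw [sum_congr rfl fun x _ => hsplit x, sum_sub_distrib, sum_trChar_mul hm, sum_trChar_mul hm]
  simp only [CharTwo.add_eq_zero]

lemma two_mul_card_traceOneSet (hm : m ≠ 0) : 2 * (#(traceOneSet m) : ℤ) = 2 ^ m := by
  simpa using two_mul_sum_traceOneSet_trChar hm 0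

lemma four_mul_sum_filter_trChar (hm : m ≠ 0) (c u : F m) :
    4 * ∑ x ∈ traceOneSet m with Ftr (c * x) = 1, trChar m (x * u)
      = (if u = 0 then 2 ^ m else 0) - (if u = 1 then 2 ^ m else 0)
        - ((if u = c then 2 ^ m else 0) - (if u = 1 + c then 2 ^ m else 0)) := by
  have hsplit : ∀ x : F m, trChar m (x * u) * (1 - trChar m (c * x))
      = trChar m (x * u) - trChar m (x * (u + c)) := fun x => by
    rw [mul_add, mul_comm x c, AddChar.map_add_eq_mul]; ring
  have hsum := two_mul_sum_filter_trace_eq_one (traceOneSet m) (fun x => c * x)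
    (fun x => trChar m (x * u))
  simp only [Int.cast_id] at hsum
  rw [show (4 : ℤ) = 2 * 2 by norm_num, mul_assoc, hsum, sum_congr rfl fun x _ => hsplit x,
    sum_sub_distrib, mul_sub, two_mul_sum_traceOneSet_trChar hm,
    two_mul_sum_traceOneSet_trChar hm]
  simp only [CharTwo.add_eq_zero]
  simp only [CharTwo.add_eq_iff_eq_add]

lemma four_mul_card_filter_traceOneSet (hm : m ≠ 0) {c : F m} (hc0 : c ≠ 0) (hc1 : c ≠ 1) :
    4 * (#{x ∈ traceOneSet m | Ftr (c * x) = 1} : ℤ) = 2 ^ m := by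
  have h := four_mul_sum_filter_trChar hm c 0
  have hc1' : (0 : F m) ≠ 1 + c := fun h => hc1 (CharTwo.add_eq_zero.1 h.symm).symm
  simpa [hc0.symm, hc1'] using h

lemma abs_lamF_le (S : Finset (F m)) (x : F m) : |lamF S x| ≤ #S := by
  rw [lamF_eq_sum_trChar]
  exact (abs_sum_le_sum_abs _ _).trans (by simp [abs_trChar])

lemma lamF_sq (S : Finset (F m)) (x : F m) :
    lamF S x ^ 2 = ∑ a ∈ S, ∑ b ∈ S, trChar m (x * (a + b)) := by
  simp only [lamF_eq_sum_trChar, sq, sum_mul_sum, mul_add, AddChar.map_add_eq_mul]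

lemma four_mul_sum_sq_lamF_le (hm : m ≠ 0) (c : F m) (S : Finset (F m)) :
    4 * ∑ x ∈ traceOneSet m with Ftr (c * x) = 1, lamF S x ^ 2 ≤ 2 ^ m * (2 * #S) := by
  have h2m : (0 : ℤ) ≤ 2 ^ m := by positivity
  have hrow : ∀ a ∈ S, ∑ b ∈ S, 4 * ∑ x ∈ traceOneSet m with Ftr (c * x) = 1,
      trChar m (x * (a + b)) ≤ 2 * 2 ^ m := by
    intro a _
    -- only the terms with `a + b ∈ {0, 1 + c}` are positive, and each occurs for at most one `b`
    calc ∑ b ∈ S, 4 * ∑ x ∈ traceOneSet m with Ftr (c * x) = 1, trChar m (x * (a + b))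
        ≤ ∑ b ∈ S, ((if a + b = 0 then 2 ^ m else 0) + (if a + b = 1 + c then 2 ^ m else 0)) :=
          sum_le_sum fun b _ => by
            rw [four_mul_sum_filter_trChar hm]; split_ifs <;> linarith
      _ ≤ 2 * 2 ^ m := by
          rw [sum_add_distrib]
          linarith [sum_ite_add_eq_le S a 0 h2m, sum_ite_add_eq_le S a (1 + c) h2m]
  calc 4 * ∑ x ∈ traceOneSet m with Ftr (c * x) = 1, lamF S x ^ 2
      = ∑ a ∈ S, ∑ b ∈ S, 4 * ∑ x ∈ traceOneSet m with Ftr (c * x) = 1,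
          trChar m (x * (a + b)) := by
        simp_rw [lamF_sq, mul_sum]
        rw [sum_comm]
        exact sum_congr rfl fun a _ => sum_comm
    _ ≤ ∑ a ∈ S, 2 * 2 ^ m := sum_le_sum hrow
    _ = 2 ^ m * (2 * #S) := by rw [sum_const, nsmul_eq_mul]; ring

lemma exists_sq_lamF_le (hm : m ≠ 0) {c : F m} (hc0 : c ≠ 0) (hc1 : c ≠ 1)
    (S : Finset (F m)) :
    ∃ x ∈ traceOneSet m, Ftr (c * x) = 1 ∧ lamF S x ^ 2 ≤ 2 * #S := by
  have hcard := four_mul_card_filter_traceOneSet hm hc0 hc1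
  have hne : {x ∈ traceOneSet m | Ftr (c * x) = 1}.Nonempty := by
    rw [nonempty_iff_ne_empty]
    rintro h
    simp [h] at hcard
    exact pow_ne_zero m two_ne_zero hcard.symm
  have hsum := four_mul_sum_sq_lamF_le hm c S
  obtain ⟨x, hx, hle⟩ := exists_le_of_sum_le hne (f := fun x => lamF S x ^ 2)
    (g := fun _ => 2 * (#S : ℤ)) (by rw [sum_const, nsmul_eq_mul]; nlinarith)
  exact ⟨x, (mem_filter.1 hx).1, (mem_filter.1 hx).2, hle⟩

lemma sq_sub_lamF_le (S : Finset (F m)) (x₀ : F m) {x : F m} (hx : lamF S x ^ 2 ≤ 2 * #S) :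
    (lamF S x₀ - lamF S x) ^ 2 ≤ 2 * #S * (#S + 3) := by
  have hx₀ : lamF S x₀ ^ 2 ≤ #S ^ 2 := sq_le_sq.2 (by simpa using abs_lamF_le S x₀)
  nlinarith [sq_nonneg (lamF S x₀ + lamF S x)]

lemma two_mul_sum_traceOneSet_lamF_mul_trChar (hm : m ≠ 0) {S : Finset (F m)} {z : F m}
    (hz : z ∈ S) (hzS : 1 + z ∉ S) :
    2 * ∑ x ∈ traceOneSet m, lamF S x * trChar m (x * z) = 2 ^ m := by
  simp_rw [lamF_eq_sum_trChar, sum_mul, ← AddChar.map_add_eq_mul, ← mul_add]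
  rw [sum_comm, mul_sum]
  simp_rw [two_mul_sum_traceOneSet_trChar hm, CharTwo.add_eq_zero, CharTwo.add_eq_iff_eq_add]
  rw [sum_sub_distrib, sum_ite_eq', sum_ite_eq', if_pos hz, if_neg hzS, sub_zero]

lemma gcd_sub_lamF_dvd_two_pow (hm : m ≠ 0) {S : Finset (F m)} {z : F m} (hz0 : z ≠ 0)
    (hz1 : z ≠ 1) (hz : z ∈ S) (hzS : 1 + z ∉ S) (x₀ : F m) :
    (univ.filter (fun x : F m => Ftr x = 1 ∧ x ≠ x₀)).gcd (fun x => lamF S x₀ - lamF S x)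
      ∣ 2 ^ m := by
  set g :=
    (univ.filter (fun x : F m => Ftr x = 1 ∧ x ≠ x₀)).gcd (fun x => lamF S x₀ - lamF S x)
  have hsum :
      2 * ∑ x ∈ traceOneSet m, (lamF S x₀ - lamF S x) * trChar m (x * z) = -2 ^ m := by
    have h0 := two_mul_sum_traceOneSet_trChar hm z
    rw [if_neg hz0, if_neg hz1, sub_zero] at h0
    simp_rw [sub_mul, sum_sub_distrib, ← mul_sum, mul_sub]
    rw [two_mul_sum_traceOneSet_lamF_mul_trChar hm hz hzS, mul_left_comm, h0, mul_zero, zero_sub]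
  have hdvd : g ∣ ∑ x ∈ traceOneSet m, (lamF S x₀ - lamF S x) * trChar m (x * z) := by
    refine dvd_sum fun x hx => ?_
    by_cases hxx : x = x₀
    · simp [hxx]
    · exact (gcd_dvd (mem_filter.2 ⟨mem_univ x, (mem_filter.1 hx).2, hxx⟩)).mul_right _
  rw [← dvd_neg, ← hsum]
  exact hdvd.mul_left 2

def charMatrix (m : ℕ) : Matrix (F m) (F m) ℂ := Matrix.of fun x y => (trChar m (x * y) : ℂ)

lemma charMatrix_mul_self (hm : m ≠ 0) : charMatrix m * charMatrix m = (2 ^ m : ℂ) • 1 := by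
  ext x y
  have hxy : ∀ v, trChar m (x * v) * trChar m (v * y) = trChar m (v * (x + y)) := fun v => by
    rw [← AddChar.map_add_eq_mul]; ring_nf
  simp only [mul_apply, charMatrix, of_apply, ← Int.cast_mul, hxy]
  rw [← Int.cast_sum, sum_trChar_mul hm, Matrix.smul_apply, one_apply]
  simp only [CharTwo.add_eq_zero]
  split_ifs <;> simp

lemma sum_adjMatrix_mul (S : Finset (F m)) (u : F m) (f : F m → ℂ) :
    ∑ v, adjMatrix S u v * f v = ∑ a ∈ S, f (u + a) := by
  rw [← Equiv.sum_comp (Equiv.addLeft u)]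
  simp [adjMatrix, ← add_assoc, CharTwo.add_self_eq_zero, sum_ite_mem]

lemma adjMatrix_mul_charMatrix (S : Finset (F m)) :
    adjMatrix S * charMatrix m = charMatrix m * diagonal fun x => (lamF S x : ℂ) := by
  ext u x
  rw [mul_apply, sum_adjMatrix_mul, mul_diagonal, lamF_eq_sum_trChar]
  rw [Int.cast_sum, mul_sum]
  refine sum_congr rfl fun a _ => ?_
  simp only [charMatrix, of_apply, add_mul, AddChar.map_add_eq_mul, Int.cast_mul, mul_comm u x,
    mul_comm a x]

lemma transferMatrix_apply (hm : m ≠ 0) (S : Finset (F m)) (t : ℝ) (u v : F m) :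
    transferMatrix S t u v = (2 ^ m)⁻¹ * ∑ x, trChar m (u * x) * trChar m (x * v)
      * Complex.exp ((t * lamF S x : ℝ) * Complex.I) := by
  have hQ : charMatrix m * ((2 ^ m : ℂ)⁻¹ • charMatrix m) = 1 := by
    rw [Matrix.mul_smul, charMatrix_mul_self hm, smul_smul,
      inv_mul_cancel₀ (pow_ne_zero m two_ne_zero), one_smul]
  have hAQ : (Complex.I • (t : ℂ) • adjMatrix S) * charMatrix m
      = charMatrix m * diagonal fun x => ((t * lamF S x : ℝ) * Complex.I : ℂ) := by
    rw [Matrix.smul_mul, Matrix.smul_mul, adjMatrix_mul_charMatrix, ← Matrix.mul_smul,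
      ← Matrix.mul_smul]
    congr 1
    ext i j
    simp only [Matrix.smul_apply, diagonal_apply, smul_eq_mul]
    split_ifs
    · push_cast; ring
    · simp
  rw [transferMatrix, Matrix.exp_eq_of_mul_eq_mul_diagonal hAQ hQ, mul_apply, mul_sum]
  refine sum_congr rfl fun x _ => ?_
  simp only [mul_diagonal, Matrix.smul_apply, charMatrix, of_apply, smul_eq_mul]
  ring

def edgeWeight (S : Finset (F m)) (t : ℝ) (c d x : F m) : ℂ :=
  Complex.exp ((t * lamF S x : ℝ) * Complex.I) * (trChar m (c * x) - trChar m (d * x))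

lemma half_mul_dotProduct_transferMatrix_mulVec (hm : m ≠ 0) (S : Finset (F m)) (t : ℝ)
    (c d : F m) :
    (1 / 2 : ℂ) * (stdBasis c - stdBasis d)
        ⬝ᵥ (transferMatrix S t *ᵥ (stdBasis 0 - stdBasis 1))
      = (2 ^ m)⁻¹ * ∑ x ∈ traceOneSet m, edgeWeight S t c d x := by
  have hT := two_mul_sum_filter_trace_eq_one univ (fun x => x) (edgeWeight S t c d)
  rw [← traceOneSet] at hT
  have hH : transferMatrix S t c 0 - transferMatrix S t c 1
      - (transferMatrix S t d 0 - transferMatrix S t d 1)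
      = (2 ^ m)⁻¹ * ∑ x, edgeWeight S t c d x * (1 - trChar m x) := by
    simp only [transferMatrix_apply hm, ← mul_sub, ← sum_sub_distrib]
    congr 1
    refine sum_congr rfl fun x _ => ?_
    simp only [edgeWeight, mul_zero, mul_one, AddChar.map_zero_eq_one]
    push_cast
    ring
  rw [stdBasis_sub_dotProduct_mulVec, hH, ← hT]
  ring

lemma norm_edgeWeight_le (S : Finset (F m)) (t : ℝ) (c d x : F m) :
    ‖edgeWeight S t c d x‖ ≤ 2 := by
  rw [edgeWeight, norm_mul, Complex.norm_exp_ofReal_mul_I, one_mul]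
  refine (norm_sub_le _ _).trans ?_
  simp only [Complex.norm_intCast, ← Int.cast_abs, abs_trChar]
  norm_num

lemma norm_sum_edgeWeight_of_hasPEST (hm : m ≠ 0) {S : Finset (F m)} {c d : F m} {t : ℝ}
    (h : hasPEST S 0 1 c d t) : ‖∑ x ∈ traceOneSet m, edgeWeight S t c d x‖ = 2 ^ m := by
  rw [hasPEST, half_mul_dotProduct_transferMatrix_mulVec hm, norm_mul, norm_inv, norm_pow,
    Complex.norm_two, pow_eq_one_iff_of_nonneg (by positivity) two_ne_zero,
    inv_mul_eq_one₀ (by positivity)] at h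
  exact h.symm

lemma lamF_ne_of_hasPEST (hm : m ≠ 0) {S : Finset (F m)} {c d : F m} {t : ℝ}
    (h : hasPEST S 0 1 c d t) {x₀ x : F m} (hx₀ : Ftr x₀ = 1) (hcx₀ : Ftr (c * x₀) = 0)
    (hx : Ftr x = 1) (hcx : Ftr (c * x) = 1) : lamF S x ≠ lamF S x₀ := by
  have hmem : ∀ {y}, Ftr y = 1 → y ∈ traceOneSet m := fun hy => by simp [traceOneSet, hy]
  have hsum := norm_sum_edgeWeight_of_hasPEST hm h
  have hnorm : ‖∑ y ∈ traceOneSet m, edgeWeight S t c d y‖ = #(traceOneSet m) * 2 := by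
    rw [hsum]
    exact_mod_cast (two_mul_card_traceOneSet hm).symm.trans (mul_comm _ _)
  have hw := fun {y} (hy : Ftr y = 1) =>
    smul_eq_sum_of_norm_sum_eq (fun y _ => norm_edgeWeight_le S t c d y) hnorm (hmem hy)
  have hcard : (#(traceOneSet m) : ℝ) ≠ 0 :=
    Nat.cast_ne_zero.2 (card_ne_zero_of_mem (hmem hx))
  have heq : edgeWeight S t c d x = edgeWeight S t c d x₀ :=
    smul_right_injective ℂ hcard ((hw hx).trans (hw hx₀).symm)
  have hne0 : edgeWeight S t c d x₀ ≠ 0 := by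
    intro h0
    rw [← hw hx₀, h0, smul_zero, norm_zero] at hsum
    exact pow_ne_zero m two_ne_zero hsum.symm
  have hd : trChar m (d * x₀) ≠ 1 := fun hd => hne0 <| by
    rw [edgeWeight, trChar_of_trace_eq_zero hcx₀, hd, sub_self, mul_zero]
  intro hlam
  rw [edgeWeight, edgeWeight, hlam, trChar_of_trace_eq_one hcx, trChar_of_trace_eq_zero hcx₀]
    at heq
  -- `-1 - χ(dx) ∈ {-2, 0}` and `1 - χ(dx₀) ∈ {0, 2}` can only meet at `0`, which `hd` excludes.
  have hint : -1 - trChar m (d * x) = 1 - trChar m (d * x₀) := by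
    exact_mod_cast mul_left_cancel₀ (Complex.exp_ne_zero _) heq
  rcases trChar_eq_one_or_eq_neg_one (d * x) with h | h <;>
    rcases trChar_eq_one_or_eq_neg_one (d * x₀) with h' | h' <;> omega

end CubelikePEST

open CubelikePEST

theorem gcd_eq_pow_two_of_hasPEST_general {m : ℕ} (hm : 1 ≤ m)
    (S : Finset (GaloisField 2 m)) (h0 : (0 : GaloisField 2 m) ∉ S)
    (s : ℕ) (hs : S.card = s)
    (c d : GaloisField 2 m) (hc0 : c ≠ 0) (hc1 : c ≠ 1)
    (hP : ∃ t : ℝ, 0 < t ∧ hasPEST S 0 1 c d t)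
    (z₀ : GaloisField 2 m) (hz₀ : z₀ ∈ S) (hz₀1 : z₀ ≠ 1) (hz₀S : 1 + z₀ ∉ S)
    (x₀ : GaloisField 2 m) (hx₀ : Ftr (c * x₀) = 0 ∧ Ftr x₀ = 1)
    (M : ℤ)
    (hM : M = (univ.filter (fun x : GaloisField 2 m => Ftr x = 1 ∧ x ≠ x₀)).gcd
      (fun x => lamF S x₀ - lamF S x)) :
    ∃ ℓ : ℕ, M = 2 ^ ℓ ∧ ℓ ≤ Nat.log 2 (2 * s * (s + 3)) / 2 := by
  obtain ⟨t, -, hPEST⟩ := hP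
  subst hs
  have hm0 : m ≠ 0 := by omega
  have hz₀0 : z₀ ≠ 0 := fun h => h0 (h ▸ hz₀)
  obtain ⟨ℓ, rfl⟩ := Int.exists_eq_two_pow_of_dvd
    (hM ▸ Int.nonneg_of_normalize_eq_self normalize_gcd)
    (hM ▸ gcd_sub_lamF_dvd_two_pow hm0 hz₀0 hz₀1 hz₀ hz₀S x₀)
  refine ⟨ℓ, rfl, ?_⟩
  obtain ⟨x₁, hx₁, hcx₁, hx₁sq⟩ := exists_sq_lamF_le hm0 hc0 hc1 S
  have hx₁1 : Ftr x₁ = 1 := (mem_filter.1 hx₁).2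
  have hx₁x₀ : x₁ ≠ x₀ := by rintro rfl; simp [hx₀.1] at hcx₁
  have hne : lamF S x₀ - lamF S x₁ ≠ 0 :=
    sub_ne_zero.2 (lamF_ne_of_hasPEST hm0 hPEST hx₀.2 hx₀.1 hx₁1 hcx₁).symm
  have hdvd : (2 : ℤ) ^ ℓ ∣ lamF S x₀ - lamF S x₁ :=
    hM ▸ gcd_dvd (mem_filter.2 ⟨mem_univ _, hx₁1, hx₁x₀⟩)
  have hle : (2 : ℤ) ^ ℓ ≤ |lamF S x₀ - lamF S x₁| :=
    Int.le_of_dvd (abs_pos.2 hne) ((dvd_abs _ _).2 hdvd)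
  refine Nat.le_log_div_two_of_sq_pow_le one_lt_two ?_
  have hsq : ((2 : ℤ) ^ ℓ) ^ 2 ≤ 2 * #S * (#S + 3) :=
    calc ((2 : ℤ) ^ ℓ) ^ 2 ≤ |lamF S x₀ - lamF S x₁| ^ 2 := pow_le_pow_left₀ (by positivity) hle 2
      _ ≤ 2 * #S * (#S + 3) := by rw [sq_abs]; exact sq_sub_lamF_le S x₀ hx₁sq
  exact_mod_cast hsq

/-- If `Cay(𝔽_{2^m}, S)` has PEST from `(0,1)` to `(c,d)` and there is `z₀ ∈ S`, `z₀ ≠ 1`,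
with `1 + z₀ ∉ S`, then `M = gcd{λ_{x₀} - λ_x : x ∈ T₁, x ≠ x₀}` is a power of 2,
say `M = 2^ℓ`, with `ℓ ≤ ⌊log₂(2s(s+3))/2⌋`. -/
theorem gcd_eq_pow_two_of_hasPEST {m : ℕ} (hm : 1 ≤ m)
    (S : Finset (GaloisField 2 m)) (h0 : (0 : GaloisField 2 m) ∉ S)
    (h1 : (1 : GaloisField 2 m) ∈ S) (s : ℕ) (hs : S.card = s)
    (hgen : AddSubgroup.closure (S : Set (GaloisField 2 m)) = ⊤)
    (c d : GaloisField 2 m) (hcd : c + d ∈ S) (hc0 : c ≠ 0) (hc1 : c ≠ 1)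
    (hP : ∃ t : ℝ, 0 < t ∧ hasPEST S 0 1 c d t)
    (z₀ : GaloisField 2 m) (hz₀ : z₀ ∈ S) (hz₀1 : z₀ ≠ 1) (hz₀S : 1 + z₀ ∉ S)
    (x₀ : GaloisField 2 m) (hx₀ : Ftr (c * x₀) = 0 ∧ Ftr x₀ = 1)
    (M : ℤ)
    (hM : M = (univ.filter (fun x : GaloisField 2 m => Ftr x = 1 ∧ x ≠ x₀)).gcd
      (fun x => lamF S x₀ - lamF S x)) :
    ∃ ℓ : ℕ, M = 2 ^ ℓ ∧ ℓ ≤ Nat.log 2 (2 * s * (s + 3)) / 2 :=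
  gcd_eq_pow_two_of_hasPEST_general hm S h0 s hs c d hc0 hc1 hP z₀ hz₀ hz₀1 hz₀S x₀ hx₀ M hM
end
end

section
/- Let k ≥ 2 and m = 2k + 1. Let f : 𝔽₂^{2k} → 𝔽₂ be a bent function, i.e., its Walsh–Hadamard transform f̂(a) = Σ_{x ∈ 𝔽₂^{2k}} (−1)^{f(x) + a·x} satisfies f̂(a) ∈ {2^k, −2^k} for every a ∈ 𝔽₂^{2k}, and suppose f(1,1,…,1) = 1. Let S = supp(f) ⊆ 𝔽₂^{2k} and S' = {(ε, z) ∈ 𝔽₂^m : ε ∈ 𝔽₂, z ∈ S} (identifying 𝔽₂^m with 𝔽₂ × 𝔽₂^{2k}). Set a = (0,0,…,0), b = (1,1,…,1), c = (1,0,…,0), d = (0,1,…,1) in 𝔽₂^m. Then the cubelike graph Γ = Cay(𝔽₂^m, S') has PEST from the edge (a,b) to the edge (c,d) at time π/2^k. -/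
/-!
Write `A` for the adjacency matrix of `Cay(𝔽₂ × 𝔽₂^{2k}, 𝔽₂ × supp f)` and put `u = e_a - e_b`,
`v = e_c - e_d`. Since `A` only sees second coordinates, `A (u - v) = 0`, while `u + v` is lifted
from `e_0 - e_1` on `𝔽₂^{2k}`. There the indicator matrix of `supp f` is `(J - C) / 2` with
`C y z = (-1)^{f(y+z)}`, and bentness of `f` says that `C` is a Hadamard matrix, `C² = 2^{2k}`;
since `J` and `J C` kill vectors of sum zero, this gives `A² (u + v) = 2^{2k} (u + v)`.
So `exp (i t A)` fixes `u - v` and, at `t = π / 2^k` where `e^{± i t 2^k} = -1`, negates `u + v`: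
it sends `u` to `-v`.
-/

open Matrix Finset

noncomputable section

/-- The eigenvalue `λ_x = ∑_{s ∈ S} (-1)^{x·s}` of a cubelike graph. -/
def lam {m : ℕ} (S : Finset (Fin m → ZMod 2)) (x : Fin m → ZMod 2) : ℤ :=
  ∑ s ∈ S, (-1) ^ (x ⬝ᵥ s).val

/-- The Walsh–Hadamard transform of a Boolean function `f : 𝔽₂^n → 𝔽₂`. -/
def walsh {n : ℕ} (f : (Fin n → ZMod 2) → ZMod 2) (x : Fin n → ZMod 2) : ℤ :=
  ∑ y : Fin n → ZMod 2, (-1) ^ (f y + x ⬝ᵥ y).val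

def sign₂ (a : ZMod 2) : ℂ := (-1) ^ a.val

@[simp] lemma sign₂_zero : sign₂ 0 = 1 := rfl

@[simp] lemma sign₂_one : sign₂ 1 = -1 := pow_one _

lemma ZMod.eq_zero_or_eq_one (a : ZMod 2) : a = 0 ∨ a = 1 := by decide +revert

lemma sign₂_add (a b : ZMod 2) : sign₂ (a + b) = sign₂ a * sign₂ b := by
  rcases a.eq_zero_or_eq_one with rfl | rfl <;> rcases b.eq_zero_or_eq_one with rfl | rfl <;>
    simp [CharTwo.add_self_eq_zero]

lemma two_mul_ite_eq_one_sub_sign₂ (a : ZMod 2) :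
    2 * (if a = 1 then 1 else 0 : ℂ) = 1 - sign₂ a := by
  rcases a.eq_zero_or_eq_one with rfl | rfl <;> norm_num

lemma ZModModule.add_add_eq_zero_iff {G : Type*} [AddCommGroup G] [Module (ZMod 2) G]
    (x y z : G) : x + y + z = 0 ↔ y = x + z := by
  rw [add_right_comm, add_eq_zero_iff_eq_neg, ZModModule.neg_eq_self, eq_comm]

section Walsh

variable {n : ℕ}

lemma sum_sign₂_dotProduct (w : Fin n → ZMod 2) :
    ∑ y, sign₂ (y ⬝ᵥ w) = if w = 0 then (2 : ℂ) ^ n else 0 := by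
  split_ifs with hw
  · simp [hw]
  obtain ⟨i, hi⟩ := Function.ne_iff.mp hw
  have hwi : w i = 1 := (w i).eq_zero_or_eq_one.resolve_left hi
  -- translating by `eᵢ` flips every sign, so the sum equals its own negative
  have hflip : ∀ y, sign₂ ((y + Pi.single i 1) ⬝ᵥ w) = -sign₂ (y ⬝ᵥ w) := fun y => by
    rw [add_dotProduct, sign₂_add, single_dotProduct, hwi, mul_one, sign₂_one, mul_neg_one]
  have h := Equiv.sum_comp (Equiv.addRight (Pi.single i (1 : ZMod 2))) fun y => sign₂ (y ⬝ᵥ w)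
  simp only [Equiv.coe_addRight, hflip, sum_neg_distrib] at h
  linear_combination -h / 2

lemma cast_walsh (f : (Fin n → ZMod 2) → ZMod 2) (a : Fin n → ZMod 2) :
    (walsh f a : ℂ) = ∑ x, sign₂ (f x) * sign₂ (a ⬝ᵥ x) := by
  push_cast [walsh]
  exact sum_congr rfl fun x _ => sign₂_add _ _

def IsBent (f : (Fin n → ZMod 2) → ZMod 2) : Prop :=
  ∀ a, walsh f a ^ 2 = 2 ^ n

def signMatrix (f : (Fin n → ZMod 2) → ZMod 2) : Matrix (Fin n → ZMod 2) (Fin n → ZMod 2) ℂ :=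
  of fun y z => sign₂ (f (y + z))

variable {f : (Fin n → ZMod 2) → ZMod 2}

lemma IsBent.sum_sign₂_mul_sign₂_add (hf : IsBent f) (u : Fin n → ZMod 2) :
    ∑ x, sign₂ (f x) * sign₂ (f (x + u)) = if u = 0 then (2 : ℂ) ^ n else 0 := by
  -- evaluate `∑ₐ W(a)² (-1)^{a·u}` once by expanding the squares and once by bentness
  have hfourier : ∑ a, (walsh f a : ℂ) ^ 2 * sign₂ (a ⬝ᵥ u)
      = 2 ^ n * ∑ x, sign₂ (f x) * sign₂ (f (x + u)) := calc
    _ = ∑ a, ∑ x, ∑ x', sign₂ (f x) * sign₂ (f x') * sign₂ (a ⬝ᵥ (x + x' + u)) := by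
      refine sum_congr rfl fun a _ => ?_
      rw [cast_walsh, sq, sum_mul_sum, sum_mul]
      refine sum_congr rfl fun x _ => ?_
      rw [sum_mul]
      refine sum_congr rfl fun x' _ => ?_
      rw [dotProduct_add, dotProduct_add, sign₂_add, sign₂_add]
      ring
    _ = ∑ x, ∑ x', sign₂ (f x) * sign₂ (f x') * ∑ a, sign₂ (a ⬝ᵥ (x + x' + u)) := by
      rw [sum_comm]
      simp only [mul_sum]
      exact sum_congr rfl fun x _ => sum_comm
    _ = 2 ^ n * ∑ x, sign₂ (f x) * sign₂ (f (x + u)) := by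
      simp only [sum_sign₂_dotProduct, ZModModule.add_add_eq_zero_iff, mul_ite, mul_zero,
        sum_ite_eq', mem_univ, if_true, mul_sum]
      exact sum_congr rfl fun x _ => by ring
  have hwalsh : ∑ a, (walsh f a : ℂ) ^ 2 * sign₂ (a ⬝ᵥ u)
      = 2 ^ n * if u = 0 then 2 ^ n else 0 := by
    simp only [← Int.cast_pow, hf _, ← mul_sum, sum_sign₂_dotProduct]
    push_cast
    rfl
  exact mul_left_cancel₀ (pow_ne_zero n two_ne_zero) (hfourier.symm.trans hwalsh)

lemma IsBent.signMatrix_mul_self (hf : IsBent f) :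
    signMatrix f * signMatrix f = (2 : ℂ) ^ n • (1 : Matrix _ _ ℂ) := by
  ext y z
  have hcancel : ∀ x, y + (x + y) = x := fun x => by
    rw [add_comm x, ← add_assoc, ZModModule.add_self, zero_add]
  rw [mul_apply, ← Equiv.sum_comp (Equiv.addRight y)]
  simp only [signMatrix, of_apply, Equiv.coe_addRight, hcancel, add_assoc,
    hf.sum_sign₂_mul_sign₂_add, add_eq_zero_iff_eq_neg, ZModModule.neg_eq_self, Matrix.smul_apply,
    one_apply, smul_eq_mul, mul_ite, mul_one, mul_zero]

lemma sum_signMatrix_mulVec (f : (Fin n → ZMod 2) → ZMod 2) (q : (Fin n → ZMod 2) → ℂ) :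
    ∑ y, (signMatrix f *ᵥ q) y = (∑ x, sign₂ (f x)) * ∑ z, q z := by
  simp only [mulVec, dotProduct, signMatrix, of_apply]
  rw [sum_comm, mul_sum]
  refine sum_congr rfl fun z _ => ?_
  rw [← sum_mul, ← Equiv.sum_comp (Equiv.addRight z) fun x => sign₂ (f x)]
  rfl

lemma two_smul_adjMatrix_supp_mulVec (f : (Fin n → ZMod 2) → ZMod 2)
    (q : (Fin n → ZMod 2) → ℂ) :
    (2 : ℂ) • (adjMatrix (univ.filter fun x => f x = 1) *ᵥ q)
      = (fun _ => ∑ z, q z) - signMatrix f *ᵥ q := by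
  funext y
  simp only [Pi.smul_apply, Pi.sub_apply, mulVec, dotProduct, adjMatrix, signMatrix, of_apply,
    mem_filter, mem_univ, true_and, smul_eq_mul, mul_sum, ← sum_sub_distrib]
  refine sum_congr rfl fun z _ => ?_
  rw [← mul_assoc, two_mul_ite_eq_one_sub_sign₂]
  ring

lemma IsBent.four_smul_adjMatrix_supp_mulVec_mulVec (hf : IsBent f) {q : (Fin n → ZMod 2) → ℂ}
    (hq : ∑ z, q z = 0) :
    (4 : ℂ) • (adjMatrix (univ.filter fun x => f x = 1) *ᵥ
      (adjMatrix (univ.filter fun x => f x = 1) *ᵥ q)) = (2 : ℂ) ^ n • q := by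
  set B := adjMatrix (univ.filter fun x => f x = 1)
  have hBq : (2 : ℂ) • (B *ᵥ q) = -(signMatrix f *ᵥ q) := by
    rw [two_smul_adjMatrix_supp_mulVec, hq]
    funext y
    simp
  calc (4 : ℂ) • (B *ᵥ (B *ᵥ q))
      = -((2 : ℂ) • (B *ᵥ (signMatrix f *ᵥ q))) := by
        rw [show (4 : ℂ) = 2 * 2 by norm_num, mul_smul, ← mulVec_smul, hBq, mulVec_neg, smul_neg]
    _ = signMatrix f *ᵥ (signMatrix f *ᵥ q) := by
        rw [two_smul_adjMatrix_supp_mulVec, sum_signMatrix_mulVec, hq, mul_zero]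
        funext y
        simp
    _ = (2 : ℂ) ^ n • q := by
        rw [mulVec_mulVec, hf.signMatrix_mul_self, smul_mulVec, one_mulVec]

end Walsh

section CayleyProduct

variable {H V : Type*} [AddCommGroup H] [Fintype H] [DecidableEq H]
  [AddCommGroup V] [Fintype V] [DecidableEq V]

lemma adjMatrix_univ_prod_mulVec_comp_snd (S : Finset V) (q : V → ℂ) :
    adjMatrix ((univ : Finset H) ×ˢ S) *ᵥ (q ∘ Prod.snd)
      = ((Fintype.card H : ℂ) • (adjMatrix S *ᵥ q)) ∘ Prod.snd := by
  funext w
  simp [mulVec, dotProduct, Fintype.sum_prod_type, adjMatrix]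

lemma adjMatrix_univ_prod_mulVec_stdBasis (S : Finset V) (δ : H) (y : V) :
    adjMatrix ((univ : Finset H) ×ˢ S) *ᵥ stdBasis (δ, y)
      = (adjMatrix S *ᵥ stdBasis y) ∘ Prod.snd := by
  funext w
  simp [mulVec, dotProduct, _root_.stdBasis, adjMatrix]

end CayleyProduct

lemma stdBasis_zero_add_stdBasis_one {V : Type*} [DecidableEq V] (y : V) :
    stdBasis ((0 : ZMod 2), y) + stdBasis (1, y) = stdBasis y ∘ Prod.snd := by
  funext ⟨δ, z⟩
  rcases ZMod.eq_zero_or_eq_one δ with rfl | rfl <;> simp [_root_.stdBasis]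

lemma stdBasis_sub_dotProduct_self {G : Type*} [Fintype G] [DecidableEq G] {a b : G}
    (hab : a ≠ b) :
    (stdBasis a - stdBasis b) ⬝ᵥ (stdBasis a - stdBasis b) = 2 := by
  simp [dotProduct, _root_.stdBasis, mul_sub, sum_sub_distrib, hab, hab.symm, one_add_one_eq_two]

lemma exp_mulVec_of_mulVec_eq_smul {ι : Type*} [Fintype ι] [DecidableEq ι] {M : Matrix ι ι ℂ}
    {x : ι → ℂ} {μ : ℂ} (h : M *ᵥ x = μ • x) :
    NormedSpace.exp M *ᵥ x = Complex.exp μ • x := by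
  -- any normed-ring structure on matrices will do: it only serves to sum the exponential series
  let := Matrix.linftyOpNormedRing (n := ι) (α := ℂ)
  let := Matrix.linftyOpNormedAlgebra (n := ι) (R := ℂ) (α := ℂ)
  have hpow : ∀ m : ℕ, M ^ m *ᵥ x = μ ^ m • x := fun m => by
    induction m with
    | zero => simp
    | succ m ih => rw [pow_succ, ← mulVec_mulVec, h, mulVec_smul, ih, smul_smul, ← pow_succ']
  have hM : HasSum (fun m => ((m.factorial : ℂ)⁻¹ * μ ^ m) • x) (NormedSpace.exp M *ᵥ x) := by
    convert (NormedSpace.exp_series_hasSum_exp' (𝕂 := ℂ) M).map (mulVec.addMonoidHomLeft x)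
      (continuous_id.matrix_mulVec continuous_const) using 1
    · funext m
      simp [mulVec.addMonoidHomLeft, smul_mulVec, hpow, smul_smul]
    · rfl
  have hμ := (NormedSpace.exp_series_hasSum_exp' (𝕂 := ℂ) μ).smul_const x
  simp only [smul_eq_mul, ← Complex.exp_eq_exp_ℂ] at hμ
  exact hM.unique hμ

section Transfer

variable {G : Type*} [AddCommGroup G] [Fintype G] [DecidableEq G] {S : Finset G}

lemma transferMatrix_mulVec_of_mulVec_eq_smul {x : G → ℂ} {μ : ℂ} (h : adjMatrix S *ᵥ x = μ • x)
    (t : ℝ) : transferMatrix S t *ᵥ x = Complex.exp (Complex.I * t * μ) • x :=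
  exp_mulVec_of_mulVec_eq_smul <| by
    rw [smul_mulVec, smul_mulVec, h, smul_smul, smul_smul, mul_assoc]

/-- `ω p ± A p` are eigenvectors for `±ω`, and `exp (± i π) = -1`. -/
lemma transferMatrix_mulVec_eq_neg {p : G → ℂ} {ω t : ℝ} (hω : ω ≠ 0)
    (h : adjMatrix S *ᵥ (adjMatrix S *ᵥ p) = ((ω : ℂ) ^ 2) • p) (ht : t * ω = Real.pi) :
    transferMatrix S t *ᵥ p = -p := by
  set A := adjMatrix S
  have hexp : Complex.exp (Complex.I * t * ω) = -1 := by
    rw [mul_assoc, ← Complex.ofReal_mul, ht, mul_comm, Complex.exp_pi_mul_I]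
  have hexp' : Complex.exp (Complex.I * t * -ω) = -1 := by
    rw [mul_neg, mul_assoc, ← Complex.ofReal_mul, ht, mul_comm, Complex.exp_neg_pi_mul_I]
  have hplus : A *ᵥ ((ω : ℂ) • p + A *ᵥ p) = (ω : ℂ) • ((ω : ℂ) • p + A *ᵥ p) := by
    rw [mulVec_add, mulVec_smul, h]
    module
  have hminus : A *ᵥ ((ω : ℂ) • p - A *ᵥ p) = (-ω : ℂ) • ((ω : ℂ) • p - A *ᵥ p) := by
    rw [mulVec_sub, mulVec_smul, h]
    module
  have h2ω : (2 * ω : ℂ) ≠ 0 := by exact_mod_cast mul_ne_zero two_ne_zero hω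
  refine smul_right_injective _ h2ω ?_
  calc (2 * ω : ℂ) • (transferMatrix S t *ᵥ p)
      = transferMatrix S t *ᵥ ((ω : ℂ) • p + A *ᵥ p)
        + transferMatrix S t *ᵥ ((ω : ℂ) • p - A *ᵥ p) := by
        rw [← mulVec_add, ← mulVec_smul]
        congr 1
        module
    _ = (2 * ω : ℂ) • -p := by
        rw [transferMatrix_mulVec_of_mulVec_eq_smul hplus,
          transferMatrix_mulVec_of_mulVec_eq_smul hminus, hexp, hexp']
        module

end Transfer

theorem hasPEST_univ_prod_supp_of_isBent {k : ℕ} {f : (Fin (2 * k) → ZMod 2) → ZMod 2}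
    (hf : IsBent f) (y y' : Fin (2 * k) → ZMod 2) :
    hasPEST ((univ : Finset (ZMod 2)) ×ˢ univ.filter fun x => f x = 1)
      ((0 : ZMod 2), y) (1, y') (1, y) (0, y') (Real.pi / 2 ^ k) := by
  set A := adjMatrix ((univ : Finset (ZMod 2)) ×ˢ univ.filter fun x => f x = 1)
  set T := transferMatrix ((univ : Finset (ZMod 2)) ×ˢ univ.filter fun x => f x = 1)
    (Real.pi / 2 ^ k)
  set u := stdBasis ((0 : ZMod 2), y) - stdBasis (1, y')
  set v := stdBasis ((1 : ZMod 2), y) - stdBasis (0, y')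
  have hAs : A *ᵥ (u - v) = 0 := by
    simp only [u, v, A, mulVec_sub, adjMatrix_univ_prod_mulVec_stdBasis, sub_self]
  have hp : u + v = (stdBasis y - stdBasis y') ∘ Prod.snd := by
    calc u + v = (stdBasis (0, y) + stdBasis (1, y)) - (stdBasis (0, y') + stdBasis (1, y')) := by
          simp only [u, v]
          abel
      _ = stdBasis y ∘ Prod.snd - stdBasis y' ∘ Prod.snd := by
          rw [stdBasis_zero_add_stdBasis_one, stdBasis_zero_add_stdBasis_one]
      _ = (stdBasis y - stdBasis y') ∘ Prod.snd := rfl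
  have hAp : A *ᵥ (A *ᵥ (u + v)) = (((2 ^ k : ℝ) : ℂ) ^ 2) • (u + v) := by
    have hq : ∑ z, (stdBasis y - stdBasis y') z = 0 := by simp [_root_.stdBasis]
    have h4 := congrFun (hf.four_smul_adjMatrix_supp_mulVec_mulVec hq)
    rw [hp, adjMatrix_univ_prod_mulVec_comp_snd, adjMatrix_univ_prod_mulVec_comp_snd, mulVec_smul]
    funext w
    simp only [Function.comp_apply, Pi.smul_apply, smul_eq_mul, ZMod.card] at h4 ⊢
    push_cast
    linear_combination h4 w.2
  have hHs : T *ᵥ (u - v) = u - v := by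
    simpa using transferMatrix_mulVec_of_mulVec_eq_smul (μ := 0) (by rw [hAs, zero_smul]) _
  have hHp : T *ᵥ (u + v) = -(u + v) :=
    transferMatrix_mulVec_eq_neg (by positivity) hAp (by field_simp)
  have hHu : T *ᵥ u = -v := by
    refine smul_right_injective _ (two_ne_zero (α := ℂ)) ?_
    dsimp only
    rw [← mulVec_smul, show (2 : ℂ) • u = (u - v) + (u + v) by module, mulVec_add, hHs, hHp]
    module
  have hcd : ((1 : ZMod 2), y) ≠ (0, y') := by simp
  rw [hasPEST, hHu, dotProduct_neg, stdBasis_sub_dotProduct_self hcd]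
  norm_num

theorem hasPEST_of_bent_general {k : ℕ}
    (f : (Fin (2 * k) → ZMod 2) → ZMod 2)
    (hbent : ∀ a : Fin (2 * k) → ZMod 2, walsh f a = 2 ^ k ∨ walsh f a = -2 ^ k)
    (S : Finset (Fin (2 * k) → ZMod 2)) (hS : S = univ.filter (fun y => f y = 1))
    (S' : Finset (ZMod 2 × (Fin (2 * k) → ZMod 2)))
    (hS' : S' = (univ : Finset (ZMod 2)) ×ˢ S) :
    hasPEST S' ((0 : ZMod 2), (0 : Fin (2 * k) → ZMod 2))
      ((1 : ZMod 2), (fun _ => 1 : Fin (2 * k) → ZMod 2))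
      ((1 : ZMod 2), (0 : Fin (2 * k) → ZMod 2))
      ((0 : ZMod 2), (fun _ => 1 : Fin (2 * k) → ZMod 2))
      (Real.pi / 2 ^ k) := by
  subst hS hS'
  have hf : IsBent f := fun a => by rcases hbent a with h | h <;> rw [h] <;> ring
  exact hasPEST_univ_prod_supp_of_isBent hf 0 fun _ => 1

/-- Lifting a bent function `f` on `𝔽₂^{2k}` with `f(1,…,1) = 1` to the connection set
`S' = 𝔽₂ × supp(f)` of a cubelike graph on `𝔽₂^{2k+1} ≃ 𝔽₂ × 𝔽₂^{2k}` yields PEST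
from `((0,0…0),(1,1…1))` to `((1,0…0),(0,1…1))` at time `π/2^k` (Theorem 4). -/
theorem hasPEST_of_bent {k : ℕ} (hk : 2 ≤ k)
    (f : (Fin (2 * k) → ZMod 2) → ZMod 2)
    (hbent : ∀ a : Fin (2 * k) → ZMod 2, walsh f a = 2 ^ k ∨ walsh f a = -2 ^ k)
    (h1 : f (fun _ => 1) = 1)
    (S : Finset (Fin (2 * k) → ZMod 2)) (hS : S = univ.filter (fun y => f y = 1))
    (S' : Finset (ZMod 2 × (Fin (2 * k) → ZMod 2)))
    (hS' : S' = (univ : Finset (ZMod 2)) ×ˢ S) :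
    hasPEST S' ((0 : ZMod 2), (0 : Fin (2 * k) → ZMod 2))
      ((1 : ZMod 2), (fun _ => 1 : Fin (2 * k) → ZMod 2))
      ((1 : ZMod 2), (0 : Fin (2 * k) → ZMod 2))
      ((0 : ZMod 2), (fun _ => 1 : Fin (2 * k) → ZMod 2))
      (Real.pi / 2 ^ k) :=
  hasPEST_of_bent_general f hbent S hS S' hS'

end
end
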